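/- Let (Y_n) be a Markov chain on ℤ≥0 with Y₀ = 0 whose one-step transition probabilities Q(z, y) satisfy: Q(z,0) is non-increasing in z, and the chain started at a higher state stochastically dominates the chain started at a lower state. Then the sequence n ↦ P₀(Y_n = 0) is non-increasing in n. -/
import Mathlib

noncomputable section

/-- `nstep Q n y` is the `n`-step probability `P₀(Y_n = y)` of the Markov chain on `ℤ≥0`
with one-step transition probabilities `Q`, started at `0`. -/
def nstep (Q : ℕ → ℕ → ℝ) : ℕ → ℕ → ℝ
  | 0 => fun y => if y = 0 then 1 else 0
  | n + 1 => fun y => ∑' z : ℕ, nstep Q n z * Q z y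

-- Abel summation identity
lemma abel_sum (μ g : ℕ → ℝ) (N : ℕ) :
    ∑ z ∈ Finset.range N, μ z * g z =
      (∑ z ∈ Finset.range N, μ z) * g N +
      ∑ k ∈ Finset.range N, (∑ z ∈ Finset.range (k+1), μ z) * (g k - g (k+1)) := by
  induction N with
  | zero => simp
  | succ N ih =>
    rw [Finset.sum_range_succ (f := fun z => μ z * g z), ih,
      Finset.sum_range_succ (f := fun k => (∑ z ∈ Finset.range (k+1), μ z) * (g k - g (k+1))),
      Finset.sum_range_succ (f := μ)]
    ring

lemma dom_integral (μ ν g : ℕ → ℝ) (hμ0 : ∀ z, 0 ≤ μ z) (hν0 : ∀ z, 0 ≤ ν z)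
    (hμs : Summable μ) (hνs : Summable ν)
    (hg0 : ∀ z, 0 ≤ g z) (hganti : Antitone g)
    (hF : ∀ k, ∑ z ∈ Finset.range (k+1), μ z ≤ ∑ z ∈ Finset.range (k+1), ν z) :
    ∑' z, μ z * g z ≤ ∑' z, ν z * g z := by
  have hA : ∀ N, ∑ z ∈ Finset.range N, μ z ≤ ∑ z ∈ Finset.range N, ν z := by
    intro N; cases N with
    | zero => simp
    | succ k => exact hF k
  have hsμ : Summable fun z => μ z * g z :=
    Summable.of_nonneg_of_le (fun z => mul_nonneg (hμ0 z) (hg0 z))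
      (fun z => mul_le_mul_of_nonneg_left (hganti (Nat.zero_le z)) (hμ0 z))
      (hμs.mul_right (g 0))
  have hsν : Summable fun z => ν z * g z :=
    Summable.of_nonneg_of_le (fun z => mul_nonneg (hν0 z) (hg0 z))
      (fun z => mul_le_mul_of_nonneg_left (hganti (Nat.zero_le z)) (hν0 z))
      (hνs.mul_right (g 0))
  have key : ∀ N, ∑ z ∈ Finset.range N, μ z * g z ≤ ∑ z ∈ Finset.range N, ν z * g z := by
    intro N
    rw [abel_sum μ g N, abel_sum ν g N]
    apply add_le_add
    · exact mul_le_mul_of_nonneg_right (hA N) (hg0 N)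
    · refine Finset.sum_le_sum fun k _ => ?_
      exact mul_le_mul_of_nonneg_right (hF k) (sub_nonneg.2 (hganti (Nat.le_succ k)))
  exact le_of_tendsto_of_tendsto' hsμ.hasSum.tendsto_sum_nat hsν.hasSum.tendsto_sum_nat key

section helpers

variable {Q : ℕ → ℕ → ℝ} (hnonneg : ∀ z y, 0 ≤ Q z y) (hrow : ∀ z, (∑' y : ℕ, Q z y) = 1)

include hnonneg hrow

lemma hQs (z : ℕ) : Summable (Q z) := by
  by_contra h
  have := tsum_eq_zero_of_not_summable h
  rw [hrow z] at this; norm_num at this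

lemma hQsum_le (z : ℕ) (s : Finset ℕ) : ∑ y ∈ s, Q z y ≤ 1 := by
  have := Summable.sum_le_tsum s (fun j _ => hnonneg z j) (hQs hnonneg hrow z)
  rwa [hrow z] at this

lemma hQle (z y : ℕ) : Q z y ≤ 1 := by
  have := hQsum_le hnonneg hrow z {y}
  simpa using this

variable {p : ℕ → ℝ} (hp0 : ∀ z, 0 ≤ p z) (hps : Summable p)

include hp0 hps

lemma mul_summable (y : ℕ) : Summable fun z => p z * Q z y :=
  Summable.of_nonneg_of_le (fun z => mul_nonneg (hp0 z) (hnonneg z y))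
    (fun z => mul_le_of_le_one_right (hp0 z) (hQle hnonneg hrow z y)) hps

lemma mul_sum_summable (s : Finset ℕ) : Summable fun z => p z * ∑ y ∈ s, Q z y :=
  Summable.of_nonneg_of_le
    (fun z => mul_nonneg (hp0 z) (Finset.sum_nonneg fun j _ => hnonneg z j))
    (fun z => mul_le_of_le_one_right (hp0 z) (hQsum_le hnonneg hrow z s)) hps

lemma sum_tsum_swap (s : Finset ℕ) :
    ∑ y ∈ s, ∑' z, p z * Q z y = ∑' z, p z * ∑ y ∈ s, Q z y := by
  rw [← Summable.tsum_finsetSum (fun y _ => mul_summable hnonneg hrow hp0 hps y)]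
  congr 1
  ext z
  rw [Finset.mul_sum]

lemma next_summable : Summable fun y => ∑' z, p z * Q z y := by
  refine summable_of_sum_range_le (c := ∑' z, p z)
    (fun y => tsum_nonneg fun z => mul_nonneg (hp0 z) (hnonneg z y)) (fun N => ?_)
  rw [sum_tsum_swap hnonneg hrow hp0 hps]
  exact Summable.tsum_le_tsum
    (fun z => mul_le_of_le_one_right (hp0 z) (hQsum_le hnonneg hrow z _))
    (mul_sum_summable hnonneg hrow hp0 hps _) hps

end helpers

/-- Let `(Y_n)` be a Markov chain on `ℤ≥0` started at `0` whose transition probabilities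
`Q(z,·)` satisfy: `Q(z,0)` is non-increasing in `z`, and the one-step law from a higher
state stochastically dominates the one from a lower state. Then `n ↦ P₀(Y_n = 0)` is
non-increasing in `n`. -/
theorem stmt_18 (Q : ℕ → ℕ → ℝ)
    (hnonneg : ∀ z y, 0 ≤ Q z y)
    (hrow : ∀ z, (∑' y : ℕ, Q z y) = 1)
    (hzero_anti : ∀ z z' : ℕ, z ≤ z' → Q z' 0 ≤ Q z 0)
    (hdom : ∀ z z' : ℕ, z ≤ z' → ∀ y : ℕ,
      ∑ y' ∈ Finset.range (y + 1), Q z' y' ≤ ∑ y' ∈ Finset.range (y + 1), Q z y') :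
    Antitone (fun n : ℕ => nstep Q n 0) := by
  have hp0 : ∀ n y, 0 ≤ nstep Q n y := by
    intro n
    induction n with
    | zero => intro y; simp only [nstep]; split <;> norm_num
    | succ n ih => exact fun y => tsum_nonneg fun z => mul_nonneg (ih z) (hnonneg z y)
  have hps : ∀ n, Summable (nstep Q n) := by
    intro n
    induction n with
    | zero =>
      apply summable_of_ne_finset_zero (s := {0})
      intro b hb
      simp only [Finset.mem_singleton] at hb
      simp [nstep, hb]
    | succ n ih => exact next_summable hnonneg hrow (hp0 n) ih
  have hF : ∀ n y, ∑ y' ∈ Finset.range (y+1), nstep Q (n+1) y' ≤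
      ∑ y' ∈ Finset.range (y+1), nstep Q n y' := by
    intro n
    induction n with
    | zero =>
      intro y
      have h1 : ∀ y', nstep Q 1 y' = Q 0 y' := by
        intro y'
        show (∑' z, nstep Q 0 z * Q z y') = Q 0 y'
        rw [tsum_eq_single 0]
        · simp [nstep]
        · intro z hz; simp [nstep, hz]
      have h0 : ∑ y' ∈ Finset.range (y+1), nstep Q 0 y' = 1 := by
        rw [Finset.sum_eq_single 0]
        · simp [nstep]
        · intro b _ hb; simp [nstep, hb]
        · intro h; simp at h
      rw [h0]
      calc ∑ y' ∈ Finset.range (y+1), nstep Q 1 y'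
          = ∑ y' ∈ Finset.range (y+1), Q 0 y' := by
            exact Finset.sum_congr rfl fun y' _ => h1 y'
        _ ≤ 1 := hQsum_le hnonneg hrow 0 _
    | succ n ih =>
      intro y
      have hrw : ∀ m, ∑ y' ∈ Finset.range (y+1), nstep Q (m+1) y' =
          ∑' z, nstep Q m z * ∑ y' ∈ Finset.range (y+1), Q z y' := by
        intro m
        exact sum_tsum_swap hnonneg hrow (hp0 m) (hps m) _
      rw [hrw (n+1), hrw n]
      exact dom_integral (nstep Q (n+1)) (nstep Q n)
        (fun z => ∑ y' ∈ Finset.range (y+1), Q z y')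
        (hp0 (n+1)) (hp0 n) (hps (n+1)) (hps n)
        (fun z => Finset.sum_nonneg fun j _ => hnonneg z j)
        (fun z z' h => hdom z z' h y) ih
  apply antitone_nat_of_succ_le
  intro n
  have := hF n 0
  simpa using this

end
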